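/- arXiv:2409.02703 — 2 statements merged into one kernel-verified Lean document; each statement's English description precedes it below -/
import Mathlib

section
/- Let γ > 0, let H ∈ ℝ^{p×M} be a matrix, and let U ∈ ℝ^{N×r} and V ∈ ℝ^{M×r} be matrices with orthonormal columns and Σ ∈ ℝ^{r×r} a diagonal matrix. Let A, B ∈ ℝ^{N×M} be matrices with A − B = U Σ Vᵀ. Let W_A and W_B denote the unique minimizers over W ∈ ℝ^{N×p} of the regularized least-squares objectives ‖A + W H‖_F² + γ‖W‖_F² and ‖B + W H‖_F² + γ‖W‖_F², respectively. Then ‖W_A − W_B‖_F ≤ α · ‖Σ‖_F, where α = σ_max(H) / σ_min(H Hᵀ + γ I), σ_max denotes the largest singular value, and σ_min denotes the smallest singular value. -/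
open Matrix

/-- Squared Frobenius norm of a real matrix. -/
noncomputable def frobSq {m n : ℕ} (A : Matrix (Fin m) (Fin n) ℝ) : ℝ :=
  ∑ i, ∑ j, (A i j) ^ 2

/-- Frobenius norm of a real matrix. -/
noncomputable def frobNorm {m n : ℕ} (A : Matrix (Fin m) (Fin n) ℝ) : ℝ :=
  Real.sqrt (frobSq A)

/-- Largest singular value of a real matrix `H`: the square root of the largest
eigenvalue of `H Hᵀ` (for real matrices `Hᴴ = Hᵀ`). -/
noncomputable def maxSingularValue {m n : ℕ} (H : Matrix (Fin m) (Fin n) ℝ) : ℝ :=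
  Real.sqrt (⨆ i, (Matrix.isHermitian_mul_conjTranspose_self H).eigenvalues i)

/-- Smallest singular value of a real square matrix `A`: the square root of the smallest
eigenvalue of `A Aᵀ` (for real matrices `Aᴴ = Aᵀ`). -/
noncomputable def minSingularValue {n : ℕ} (A : Matrix (Fin n) (Fin n) ℝ) : ℝ :=
  Real.sqrt (⨅ i, (Matrix.isHermitian_mul_conjTranspose_self A).eigenvalues i)

/-- The regularized (ridge) least-squares objective `‖A + W H‖_F² + γ ‖W‖_F²`. -/
noncomputable def objective {N M p : ℕ} (γ : ℝ) (H : Matrix (Fin p) (Fin M) ℝ)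
    (A : Matrix (Fin N) (Fin M) ℝ) (W : Matrix (Fin N) (Fin p) ℝ) : ℝ :=
  frobSq (A + W * H) + γ * frobSq W

/-! A minimizer `W` of the ridge objective, a quadratic in `W`, satisfies the normal equations
`(A + W H) Hᵀ + γ W = 0`. Subtracting those for `A` and `B` gives
`(W_A - W_B) P = -U Σ Vᵀ Hᵀ` with `P = H Hᵀ + γ I`. Rayleigh-quotient bounds, applied row by row,
give `‖X P‖_F ≥ σ_min(P) ‖X‖_F` and `‖X Hᵀ‖_F ≤ σ_max(H) ‖X‖_F`; finally
`‖U Σ Vᵀ‖_F = ‖Σ‖_F` because `U` and `V` have orthonormal columns. -/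

namespace Matrix.IsHermitian

variable {n : Type*} [Fintype n] [DecidableEq n] {S : Matrix n n ℝ}

theorem exists_dotProduct_mulVec_eq_sum_eigenvalues (hS : S.IsHermitian) (x : n → ℝ) :
    ∃ y : n → ℝ, y ⬝ᵥ y = x ⬝ᵥ x ∧ x ⬝ᵥ S *ᵥ x = ∑ i, hS.eigenvalues i * y i ^ 2 := by
  set C : Matrix n n ℝ := (hS.eigenvectorUnitary : Matrix n n ℝ)
  have hC : C * Cᵀ = 1 := by
    simpa [C, star_eq_conjTranspose, conjTranspose_eq_transpose_of_trivial] using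
      mem_unitaryGroup_iff.mp hS.eigenvectorUnitary.2
  have hS' : S = C * diagonal hS.eigenvalues * Cᵀ := by
    conv_lhs => rw [hS.spectral_theorem]
    simp [C, Unitary.conjStarAlgAut_apply, star_eq_conjTranspose]
  refine ⟨Cᵀ *ᵥ x, ?_, ?_⟩
  · rw [dotProduct_mulVec, vecMul_transpose, mulVec_mulVec, hC, one_mulVec]
  · conv_lhs => rw [hS', ← mulVec_mulVec, ← mulVec_mulVec, dotProduct_mulVec, ← mulVec_transpose]
    simp [dotProduct, mulVec_diagonal, sq, mul_left_comm]

theorem iInf_eigenvalues_mul_dotProduct_le (hS : S.IsHermitian) (x : n → ℝ) :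
    (⨅ i, hS.eigenvalues i) * (x ⬝ᵥ x) ≤ x ⬝ᵥ S *ᵥ x := by
  obtain ⟨y, hy, hxy⟩ := hS.exists_dotProduct_mulVec_eq_sum_eigenvalues x
  rw [hxy, ← hy, dotProduct, Finset.mul_sum]
  refine Finset.sum_le_sum fun i _ => ?_
  rw [← sq]
  exact mul_le_mul_of_nonneg_right (ciInf_le (Finite.bddBelow_range _) i) (sq_nonneg _)

theorem dotProduct_mulVec_le_iSup_eigenvalues_mul (hS : S.IsHermitian) (x : n → ℝ) :
    x ⬝ᵥ S *ᵥ x ≤ (⨆ i, hS.eigenvalues i) * (x ⬝ᵥ x) := by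
  obtain ⟨y, hy, hxy⟩ := hS.exists_dotProduct_mulVec_eq_sum_eigenvalues x
  rw [hxy, ← hy, dotProduct, Finset.mul_sum]
  refine Finset.sum_le_sum fun i _ => ?_
  rw [← sq]
  exact mul_le_mul_of_nonneg_right (le_ciSup (Finite.bddAbove_range _) i) (sq_nonneg _)

end Matrix.IsHermitian

section Frobenius

variable {k m n : ℕ}

noncomputable def frobInner (X Y : Matrix (Fin m) (Fin n) ℝ) : ℝ :=
  ∑ i, X i ⬝ᵥ Y i

theorem frobSq_eq_sum_dotProduct (X : Matrix (Fin m) (Fin n) ℝ) :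
    frobSq X = ∑ i, X i ⬝ᵥ X i := by
  simp [frobSq, dotProduct, sq]

theorem frobSq_eq_trace (X : Matrix (Fin m) (Fin n) ℝ) : frobSq X = trace (X * Xᵀ) := by
  simp [frobSq_eq_sum_dotProduct, trace, mul_apply, dotProduct]

theorem frobSq_nonneg (X : Matrix (Fin m) (Fin n) ℝ) : 0 ≤ frobSq X := by
  unfold frobSq; positivity

theorem frobSq_eq_zero_iff {X : Matrix (Fin m) (Fin n) ℝ} : frobSq X = 0 ↔ X = 0 := by
  simp [frobSq, Finset.sum_eq_zero_iff_of_nonneg, sq_nonneg, Finset.sum_nonneg, ← Matrix.ext_iff]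

theorem frobSq_neg (X : Matrix (Fin m) (Fin n) ℝ) : frobSq (-X) = frobSq X := by
  simp [frobSq]

theorem frobSq_smul (t : ℝ) (X : Matrix (Fin m) (Fin n) ℝ) :
    frobSq (t • X) = t ^ 2 * frobSq X := by
  simp [frobSq, Finset.mul_sum, mul_pow]

theorem frobInner_self (X : Matrix (Fin m) (Fin n) ℝ) : frobInner X X = frobSq X :=
  (frobSq_eq_sum_dotProduct X).symm

theorem frobInner_add_left (X Y Z : Matrix (Fin m) (Fin n) ℝ) :
    frobInner (X + Y) Z = frobInner X Z + frobInner Y Z := by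
  rw [frobInner, frobInner, frobInner, ← Finset.sum_add_distrib]
  exact Finset.sum_congr rfl fun i _ => add_dotProduct (X i) (Y i) (Z i)

theorem frobInner_smul_left (t : ℝ) (X Y : Matrix (Fin m) (Fin n) ℝ) :
    frobInner (t • X) Y = t * frobInner X Y := by
  rw [frobInner, frobInner, Finset.mul_sum]
  exact Finset.sum_congr rfl fun i _ => smul_dotProduct t (X i) (Y i)

theorem frobInner_smul_right (t : ℝ) (X Y : Matrix (Fin m) (Fin n) ℝ) :
    frobInner X (t • Y) = t * frobInner X Y := by
  rw [frobInner, frobInner, Finset.mul_sum]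
  exact Finset.sum_congr rfl fun i _ => dotProduct_smul t (X i) (Y i)

theorem frobInner_mul_right (X : Matrix (Fin m) (Fin n) ℝ) (D : Matrix (Fin m) (Fin k) ℝ)
    (M : Matrix (Fin k) (Fin n) ℝ) : frobInner X (D * M) = frobInner (X * Mᵀ) D := by
  refine Finset.sum_congr rfl fun i _ => ?_
  rw [mul_apply_eq_vecMul, mul_apply_eq_vecMul, vecMul_transpose, dotProduct_comm,
    ← dotProduct_mulVec, dotProduct_comm]

theorem frobSq_add (X Y : Matrix (Fin m) (Fin n) ℝ) :
    frobSq (X + Y) = frobSq X + 2 * frobInner X Y + frobSq Y := by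
  rw [frobSq_eq_sum_dotProduct, frobSq_eq_sum_dotProduct, frobSq_eq_sum_dotProduct, frobInner,
    Finset.mul_sum, ← Finset.sum_add_distrib, ← Finset.sum_add_distrib]
  refine Finset.sum_congr rfl fun i _ => ?_
  change (X i + Y i) ⬝ᵥ (X i + Y i) = _
  rw [add_dotProduct, dotProduct_add, dotProduct_add, dotProduct_comm (Y i)]
  ring

theorem frobInner_sq_le (X Y : Matrix (Fin m) (Fin n) ℝ) :
    frobInner X Y ^ 2 ≤ frobSq X * frobSq Y := by
  have h := discrim_le_zero (a := frobSq Y) (b := 2 * frobInner X Y) (c := frobSq X) fun t => by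
    have := frobSq_nonneg (X + t • Y)
    rw [frobSq_add, frobSq_smul, frobInner_smul_right] at this
    linarith
  rw [discrim] at h
  linarith

theorem frobSq_mul_transpose_of_orthonormal (X : Matrix (Fin m) (Fin n) ℝ)
    {V : Matrix (Fin k) (Fin n) ℝ} (hV : Vᵀ * V = 1) : frobSq (X * Vᵀ) = frobSq X := by
  rw [frobSq_eq_trace, frobSq_eq_trace, transpose_mul, transpose_transpose, Matrix.mul_assoc,
    ← Matrix.mul_assoc Vᵀ, hV, Matrix.one_mul]

theorem frobSq_mul_of_orthonormal {U : Matrix (Fin k) (Fin m) ℝ} (hU : Uᵀ * U = 1)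
    (X : Matrix (Fin m) (Fin n) ℝ) : frobSq (U * X) = frobSq X := by
  rw [frobSq_eq_trace, frobSq_eq_trace, transpose_mul, Matrix.mul_assoc, trace_mul_comm,
    Matrix.mul_assoc, Matrix.mul_assoc, hU, Matrix.mul_one]

end Frobenius

section SingularValues

variable {k m n : ℕ}

theorem dotProduct_vecMul_self_eq {ι κ : Type*} [Fintype ι] [Fintype κ] (x : ι → ℝ)
    (M : Matrix ι κ ℝ) : (x ᵥ* M) ⬝ᵥ (x ᵥ* M) = x ⬝ᵥ (M * Mᴴ) *ᵥ x := by
  rw [conjTranspose_eq_transpose_of_trivial, ← mulVec_mulVec, dotProduct_mulVec,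
    mulVec_transpose]

theorem sq_maxSingularValue (M : Matrix (Fin m) (Fin n) ℝ) :
    maxSingularValue M ^ 2 = ⨆ i, (isHermitian_mul_conjTranspose_self M).eigenvalues i :=
  Real.sq_sqrt (Real.iSup_nonneg (eigenvalues_self_mul_conjTranspose_nonneg M))

theorem sq_minSingularValue (P : Matrix (Fin n) (Fin n) ℝ) :
    minSingularValue P ^ 2 = ⨅ i, (isHermitian_mul_conjTranspose_self P).eigenvalues i :=
  Real.sq_sqrt (Real.iInf_nonneg (eigenvalues_self_mul_conjTranspose_nonneg P))

theorem minSingularValue_pos [Nonempty (Fin n)] {P : Matrix (Fin n) (Fin n) ℝ} (hP : IsUnit P) :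
    0 < minSingularValue P := by
  have hPP : (P * Pᴴ).PosDef :=
    PosDef.mul_conjTranspose_self P (vecMul_injective_iff_isUnit.mpr hP)
  obtain ⟨i, hi⟩ := Finite.exists_min (isHermitian_mul_conjTranspose_self P).eigenvalues
  exact Real.sqrt_pos.mpr ((hPP.eigenvalues_pos i).trans_le (le_ciInf hi))

theorem frobSq_mul_le (Y : Matrix (Fin k) (Fin m) ℝ) (M : Matrix (Fin m) (Fin n) ℝ) :
    frobSq (Y * M) ≤ maxSingularValue M ^ 2 * frobSq Y := by
  simp only [frobSq_eq_sum_dotProduct, Finset.mul_sum, mul_apply_eq_vecMul,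
    dotProduct_vecMul_self_eq, sq_maxSingularValue]
  exact Finset.sum_le_sum fun i _ =>
    (isHermitian_mul_conjTranspose_self M).dotProduct_mulVec_le_iSup_eigenvalues_mul (Y i)

theorem sq_minSingularValue_mul_frobSq_le (Y : Matrix (Fin k) (Fin n) ℝ)
    (P : Matrix (Fin n) (Fin n) ℝ) : minSingularValue P ^ 2 * frobSq Y ≤ frobSq (Y * P) := by
  simp only [frobSq_eq_sum_dotProduct, Finset.mul_sum, mul_apply_eq_vecMul,
    dotProduct_vecMul_self_eq, sq_minSingularValue]
  exact Finset.sum_le_sum fun i _ =>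
    (isHermitian_mul_conjTranspose_self P).iInf_eigenvalues_mul_dotProduct_le (Y i)

/-- The usual proof of `‖Mᵀ‖ = ‖M‖`: `‖X Mᵀ‖² = ⟨X Mᵀ M, X⟩ ≤ σ_max(M) ‖X Mᵀ‖ ‖X‖`. -/
theorem frobSq_mul_transpose_le (X : Matrix (Fin k) (Fin n) ℝ) (M : Matrix (Fin m) (Fin n) ℝ) :
    frobSq (X * Mᵀ) ≤ maxSingularValue M ^ 2 * frobSq X := by
  have key : frobSq (X * Mᵀ) ^ 2 ≤ frobSq (X * Mᵀ) * (maxSingularValue M ^ 2 * frobSq X) :=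
    calc frobSq (X * Mᵀ) ^ 2 = frobInner (X * Mᵀ * M) X ^ 2 := by
          rw [← frobInner_self, frobInner_mul_right, transpose_transpose]
      _ ≤ frobSq (X * Mᵀ * M) * frobSq X := frobInner_sq_le _ _
      _ ≤ maxSingularValue M ^ 2 * frobSq (X * Mᵀ) * frobSq X := by
          gcongr
          · exact frobSq_nonneg X
          · exact frobSq_mul_le _ _
      _ = frobSq (X * Mᵀ) * (maxSingularValue M ^ 2 * frobSq X) := by ring
  rcases (frobSq_nonneg (X * Mᵀ)).eq_or_lt with hzero | hpos
  · rw [← hzero]; exact mul_nonneg (sq_nonneg _) (frobSq_nonneg X)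
  · exact le_of_mul_le_mul_left (by rwa [← sq]) hpos

end SingularValues

section Ridge

variable {N M p : ℕ} (γ : ℝ) (H : Matrix (Fin p) (Fin M) ℝ)

/-- Half the gradient of `objective γ H A` at `W`. -/
noncomputable def ridgeGrad (A : Matrix (Fin N) (Fin M) ℝ) (W : Matrix (Fin N) (Fin p) ℝ) :
    Matrix (Fin N) (Fin p) ℝ :=
  (A + W * H) * Hᵀ + γ • W

theorem objective_add (A : Matrix (Fin N) (Fin M) ℝ) (W D : Matrix (Fin N) (Fin p) ℝ) :
    objective γ H A (W + D) = objective γ H A W + 2 * frobInner (ridgeGrad γ H A W) D +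
      (frobSq (D * H) + γ * frobSq D) := by
  have hres : A + (W + D) * H = (A + W * H) + D * H := by rw [Matrix.add_mul, add_assoc]
  have hgrad : frobInner (ridgeGrad γ H A W) D =
      frobInner (A + W * H) (D * H) + γ * frobInner W D := by
    rw [ridgeGrad, frobInner_add_left, frobInner_smul_left, frobInner_mul_right]
  rw [objective, objective, hres, frobSq_add, frobSq_add W D, hgrad]
  ring

theorem ridgeGrad_eq_zero_of_forall_le {A : Matrix (Fin N) (Fin M) ℝ}
    {W : Matrix (Fin N) (Fin p) ℝ} (hW : ∀ W', objective γ H A W ≤ objective γ H A W') :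
    ridgeGrad γ H A W = 0 := by
  set G := ridgeGrad γ H A W
  have h := discrim_le_zero (a := frobSq (G * H) + γ * frobSq G) (b := 2 * frobSq G) (c := 0)
    fun t => by
      have := hW (W + t • G)
      rw [objective_add, frobInner_smul_right, frobInner_self, Matrix.smul_mul, frobSq_smul,
        frobSq_smul] at this
      linarith
  rw [discrim] at h
  exact frobSq_eq_zero_iff.mp (by nlinarith)

theorem ridgeGrad_sub_ridgeGrad (A B : Matrix (Fin N) (Fin M) ℝ)
    (W₁ W₂ : Matrix (Fin N) (Fin p) ℝ) :
    ridgeGrad γ H A W₁ - ridgeGrad γ H B W₂ = (W₁ - W₂) * (H * Hᵀ + γ • 1) + (A - B) * Hᵀ := by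
  simp only [ridgeGrad, Matrix.add_mul, Matrix.sub_mul, Matrix.mul_add, Matrix.mul_smul,
    Matrix.mul_one, Matrix.mul_assoc, smul_sub]
  abel

theorem posDef_mul_transpose_add_smul_one (hγ : 0 < γ) : (H * Hᵀ + γ • 1).PosDef := by
  rw [← conjTranspose_eq_transpose_of_trivial]
  exact PosDef.posSemidef_add (posSemidef_self_mul_conjTranspose H) (PosDef.one.smul hγ)

end Ridge

theorem frobNorm_le_of_sq_mul_frobSq_le {m n k l : ℕ} {X : Matrix (Fin m) (Fin n) ℝ}
    {Y : Matrix (Fin k) (Fin l) ℝ} {a b : ℝ} (ha : 0 ≤ a) (hb : 0 < b)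
    (h : b ^ 2 * frobSq X ≤ a ^ 2 * frobSq Y) : frobNorm X ≤ a / b * frobNorm Y := by
  rw [frobNorm, frobNorm, ← Real.sqrt_sq (div_nonneg ha hb.le), ← Real.sqrt_mul (sq_nonneg _)]
  refine Real.sqrt_le_sqrt ?_
  rw [div_pow, div_mul_eq_mul_div, le_div_iff₀ (by positivity), mul_comm]
  exact h

theorem ridge_minimizer_perturbation_bound_general {N M p r : ℕ} (γ : ℝ) (hγ : 0 < γ)
    (H : Matrix (Fin p) (Fin M) ℝ)
    (U : Matrix (Fin N) (Fin r) ℝ) (V : Matrix (Fin M) (Fin r) ℝ)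
    (Sig : Matrix (Fin r) (Fin r) ℝ)
    (hU : Uᵀ * U = 1) (hV : Vᵀ * V = 1)
    (A B : Matrix (Fin N) (Fin M) ℝ) (hAB : A - B = U * Sig * Vᵀ)
    (W_A W_B : Matrix (Fin N) (Fin p) ℝ)
    (hWA : ∀ W : Matrix (Fin N) (Fin p) ℝ, objective γ H A W_A ≤ objective γ H A W)
    (hWB : ∀ W : Matrix (Fin N) (Fin p) ℝ, objective γ H B W_B ≤ objective γ H B W) :
    frobNorm (W_A - W_B) ≤
      (maxSingularValue H /
        minSingularValue (H * Hᵀ + γ • (1 : Matrix (Fin p) (Fin p) ℝ))) * frobNorm Sig := by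
  set P := H * Hᵀ + γ • (1 : Matrix (Fin p) (Fin p) ℝ)
  rcases isEmpty_or_nonempty (Fin p) with hp | hp
  · rw [Subsingleton.elim (W_A - W_B) 0, show frobNorm (0 : Matrix (Fin N) (Fin p) ℝ) = 0 by
      simp [frobNorm, frobSq], maxSingularValue, minSingularValue, frobNorm]
    positivity
  have hΔ : (W_A - W_B) * P = -(U * Sig * Vᵀ * Hᵀ) := by
    have h := ridgeGrad_sub_ridgeGrad γ H A B W_A W_B
    rw [ridgeGrad_eq_zero_of_forall_le γ H hWA, ridgeGrad_eq_zero_of_forall_le γ H hWB,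
      sub_zero, hAB] at h
    exact eq_neg_of_add_eq_zero_left h.symm
  refine frobNorm_le_of_sq_mul_frobSq_le (Real.sqrt_nonneg _)
    (minSingularValue_pos (posDef_mul_transpose_add_smul_one γ H hγ).isUnit) ?_
  calc minSingularValue P ^ 2 * frobSq (W_A - W_B) ≤ frobSq ((W_A - W_B) * P) :=
        sq_minSingularValue_mul_frobSq_le _ _
    _ = frobSq (U * Sig * Vᵀ * Hᵀ) := by rw [hΔ, frobSq_neg]
    _ ≤ maxSingularValue H ^ 2 * frobSq (U * Sig * Vᵀ) := frobSq_mul_transpose_le _ _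
    _ = maxSingularValue H ^ 2 * frobSq Sig := by
        rw [frobSq_mul_transpose_of_orthonormal _ hV, frobSq_mul_of_orthonormal hU]

/-- Proposition 3.1: if the residual matrices `A` and `B` of two ridge least-squares
problems differ by `A − B = U Σ Vᵀ` with `U, V` having orthonormal columns and `Σ`
diagonal, then the unique minimizers `W_A` and `W_B` satisfy
`‖W_A − W_B‖_F ≤ (σ_max(H) / σ_min(H Hᵀ + γ I)) ‖Σ‖_F`. -/
theorem ridge_minimizer_perturbation_bound {N M p r : ℕ} (γ : ℝ) (hγ : 0 < γ)
    (H : Matrix (Fin p) (Fin M) ℝ)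
    (U : Matrix (Fin N) (Fin r) ℝ) (V : Matrix (Fin M) (Fin r) ℝ)
    (Sig : Matrix (Fin r) (Fin r) ℝ)
    (hU : Uᵀ * U = 1) (hV : Vᵀ * V = 1) (hSig : Sig.IsDiag)
    (A B : Matrix (Fin N) (Fin M) ℝ) (hAB : A - B = U * Sig * Vᵀ)
    (W_A W_B : Matrix (Fin N) (Fin p) ℝ)
    (hWA : ∀ W : Matrix (Fin N) (Fin p) ℝ, objective γ H A W_A ≤ objective γ H A W)
    (hWB : ∀ W : Matrix (Fin N) (Fin p) ℝ, objective γ H B W_B ≤ objective γ H B W) :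
    frobNorm (W_A - W_B) ≤
      (maxSingularValue H /
        minSingularValue (H * Hᵀ + γ • (1 : Matrix (Fin p) (Fin p) ℝ))) * frobNorm Sig :=
  ridge_minimizer_perturbation_bound_general γ hγ H U V Sig hU hV A B hAB W_A W_B hWA hWB
end

section
/- Let U ∈ ℝ^{N×q} and V ∈ ℝ^{s×q} have orthonormal columns, let Σ ∈ ℝ^{q×q} be diagonal, and let C ∈ ℝ^{N×w} be a new data chunk. Let Q R = [U Σ, C] be a QR decomposition of the N × (q+w) matrix [U Σ, C] (Q ∈ ℝ^{N×(q+w)} with orthonormal columns, R ∈ ℝ^{(q+w)×(q+w)} upper triangular), let V̂ ∈ ℝ^{(s+w)×(q+w)} be the block-diagonal matrix diag(V, I_w), and let R = G_U G_Σ G_Vᵀ be a singular value decomposition of R with G_U, G_V ∈ ℝ^{(q+w)×(q+w)} orthogonal and G_Σ diagonal with nonnegative entries. Then the matrices Q G_U ∈ ℝ^{N×(q+w)} and V̂ G_V ∈ ℝ^{(s+w)×(q+w)} have orthonormal columns and [U Σ Vᵀ, C] = (Q G_U) G_Σ (V̂ G_V)ᵀ; that is, the update step produces an exact singular value decomposition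 of the data matrix augmented by the new chunk C. -/
/-! Since `V̂ᵀ` only multiplies the first column block, `[U Σ Vᵀ, C] = [U Σ, C] V̂ᵀ = Q R V̂ᵀ`,
and substituting `R = G_U G_Σ G_Vᵀ` regroups this as `(Q G_U) G_Σ (V̂ G_V)ᵀ`; the products
`Q G_U` and `V̂ G_V` keep orthonormal columns because each factor has them. -/

open Matrix

/-- Ordering of the concatenated index set `Fin q ⊕ Fin w`: the first block comes before
the second block, so `R` being upper triangular means `R.BlockTriangular (sumIdx q w)`. -/
def sumIdx (q w : ℕ) : Fin q ⊕ Fin w → ℕ :=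
  Sum.elim (fun i => (i : ℕ)) (fun j => q + (j : ℕ))

namespace Matrix

variable {α l m n o : Type*} [CommSemiring α]

theorem transpose_mul_self_mul_eq_one [Fintype l] [Fintype m] [DecidableEq m] [DecidableEq n]
    {A : Matrix l m α} {B : Matrix m n α} (hA : Aᵀ * A = 1) (hB : Bᵀ * B = 1) :
    (A * B)ᵀ * (A * B) = 1 := by
  rw [transpose_mul, Matrix.mul_assoc, ← Matrix.mul_assoc Aᵀ, hA, Matrix.one_mul, hB]

theorem fromBlocks_zero_zero_transpose_mul_self_eq_one [Fintype l] [Fintype n]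
    [DecidableEq m] [DecidableEq o] {A : Matrix l m α} {D : Matrix n o α}
    (hA : Aᵀ * A = 1) (hD : Dᵀ * D = 1) :
    (fromBlocks A 0 0 D)ᵀ * fromBlocks A 0 0 D = 1 := by
  simp [fromBlocks_transpose, fromBlocks_multiply, hA, hD, fromBlocks_one]

theorem fromCols_mul_fromBlocks_one_transpose {k : Type*} [Fintype m] [Fintype n]
    [DecidableEq n] (A : Matrix l m α) (B : Matrix l n α) (V : Matrix k m α) :
    fromCols A B * (fromBlocks V 0 0 (1 : Matrix n n α))ᵀ = fromCols (A * Vᵀ) B := by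
  simp [fromBlocks_transpose, fromCols_mul_fromBlocks]

end Matrix

theorem incremental_svd_update_exact_general {N s q w : ℕ}
    (U : Matrix (Fin N) (Fin q) ℝ) (V : Matrix (Fin s) (Fin q) ℝ)
    (Sig : Matrix (Fin q) (Fin q) ℝ)
    (hV : Vᵀ * V = 1)
    (C : Matrix (Fin N) (Fin w) ℝ)
    (Q : Matrix (Fin N) (Fin q ⊕ Fin w) ℝ)
    (R : Matrix (Fin q ⊕ Fin w) (Fin q ⊕ Fin w) ℝ)
    (hQ : Qᵀ * Q = 1)
    (hQR : Q * R = Matrix.fromCols (U * Sig) C)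
    (Vhat : Matrix (Fin s ⊕ Fin w) (Fin q ⊕ Fin w) ℝ)
    (hVhat : Vhat = Matrix.fromBlocks V 0 0 (1 : Matrix (Fin w) (Fin w) ℝ))
    (G_U G_Sig G_V : Matrix (Fin q ⊕ Fin w) (Fin q ⊕ Fin w) ℝ)
    (hGU : G_Uᵀ * G_U = 1)
    (hGV : G_Vᵀ * G_V = 1)
    (hRSVD : R = G_U * G_Sig * G_Vᵀ) :
    (Q * G_U)ᵀ * (Q * G_U) = 1 ∧
    (Vhat * G_V)ᵀ * (Vhat * G_V) = 1 ∧
    Matrix.fromCols (U * Sig * Vᵀ) C = (Q * G_U) * G_Sig * (Vhat * G_V)ᵀ := by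
  refine ⟨transpose_mul_self_mul_eq_one hQ hGU, ?_, ?_⟩
  · rw [hVhat]
    have hI : (1 : Matrix (Fin w) (Fin w) ℝ)ᵀ * 1 = 1 := by rw [transpose_one, Matrix.one_mul]
    exact transpose_mul_self_mul_eq_one (fromBlocks_zero_zero_transpose_mul_self_eq_one hV hI) hGV
  calc fromCols (U * Sig * Vᵀ) C
      = fromCols (U * Sig) C * Vhatᵀ := by rw [hVhat, fromCols_mul_fromBlocks_one_transpose]
    _ = Q * R * Vhatᵀ := by rw [hQR]
    _ = Q * G_U * G_Sig * (Vhat * G_V)ᵀ := by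
        rw [hRSVD, transpose_mul]
        simp only [Matrix.mul_assoc]

/-- Correctness (before truncation) of one step of the incremental SVD update: given a data
matrix in factored SVD form `U Σ Vᵀ` and a new chunk `C`, the QR decomposition
`Q R = [U Σ, C]`, the expansion `V̂ = diag(V, I)`, and an SVD `R = G_U G_Σ G_Vᵀ` produce an
exact SVD `[U Σ Vᵀ, C] = (Q G_U) G_Σ (V̂ G_V)ᵀ`, where `Q G_U` and `V̂ G_V` have orthonormal
columns. -/
theorem incremental_svd_update_exact {N s q w : ℕ}
    (U : Matrix (Fin N) (Fin q) ℝ) (V : Matrix (Fin s) (Fin q) ℝ)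
    (Sig : Matrix (Fin q) (Fin q) ℝ)
    (hU : Uᵀ * U = 1) (hV : Vᵀ * V = 1) (hSig : Sig.IsDiag)
    (C : Matrix (Fin N) (Fin w) ℝ)
    (Q : Matrix (Fin N) (Fin q ⊕ Fin w) ℝ)
    (R : Matrix (Fin q ⊕ Fin w) (Fin q ⊕ Fin w) ℝ)
    (hQ : Qᵀ * Q = 1) (hR : R.BlockTriangular (sumIdx q w))
    (hQR : Q * R = Matrix.fromCols (U * Sig) C)
    (Vhat : Matrix (Fin s ⊕ Fin w) (Fin q ⊕ Fin w) ℝ)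
    (hVhat : Vhat = Matrix.fromBlocks V 0 0 (1 : Matrix (Fin w) (Fin w) ℝ))
    (G_U G_Sig G_V : Matrix (Fin q ⊕ Fin w) (Fin q ⊕ Fin w) ℝ)
    (hGU : G_Uᵀ * G_U = 1) (hGU' : G_U * G_Uᵀ = 1)
    (hGV : G_Vᵀ * G_V = 1) (hGV' : G_V * G_Vᵀ = 1)
    (hGSig : G_Sig.IsDiag) (hGSignonneg : ∀ i, 0 ≤ G_Sig i i)
    (hRSVD : R = G_U * G_Sig * G_Vᵀ) :
    (Q * G_U)ᵀ * (Q * G_U) = 1 ∧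
    (Vhat * G_V)ᵀ * (Vhat * G_V) = 1 ∧
    Matrix.fromCols (U * Sig * Vᵀ) C = (Q * G_U) * G_Sig * (Vhat * G_V)ᵀ :=
  incremental_svd_update_exact_general U V Sig hV C Q R hQ hQR Vhat hVhat G_U G_Sig G_V hGU hGV
    hRSVD
end
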